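/- Let A₁ ∈ ℂ^{M₁×N₁} and A₂ ∈ ℂ^{M₂×N₂}, and let the Kronecker product A = A₁ ⊗ A₂ ∈ ℂ^{M₁M₂×N₁N₂} act on 3-level block vectors in ℂ^{N₁'·N₂'·N₃'} where N₁ = N₁'N₂' and N₂ = N₃' (so the scalar entries within each level-2 block correspond to the columns of A₂). Then for any tuple s = (s₁,s₂,s₃) of positive integers with s₁ ≤ N₁', s₂ ≤ N₂', s₃ ≤ N₃', the hierarchical restricted isometry constant satisfies δ_{(s₁,s₂,s₃)}(A₁ ⊗ A₂) ≤ (1 + δ_{s₁s₂}(A₁))(1 + δ_{s₃}(A₂)) − 1. -/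

import Mathlib

open scoped Classical

noncomputable section

/-- A vector is `s`-sparse if at most `s` of its entries are nonzero. -/
def Sparse {ι : Type*} [Fintype ι] (s : ℕ) (x : ι → ℂ) : Prop :=
  (Finset.univ.filter fun i => x i ≠ 0).card ≤ s

/-- Squared Euclidean norm. -/
def sqNorm {ι : Type*} [Fintype ι] (x : ι → ℂ) : ℝ := ∑ i, ‖x i‖ ^ 2

/-- Euclidean norm. -/
def enorm {ι : Type*} [Fintype ι] (x : ι → ℂ) : ℝ := Real.sqrt (sqNorm x)

/-- The restricted isometry constant `δ_s(A)`: the smallest `δ ≥ 0` such that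
`(1−δ)‖x‖² ≤ ‖Ax‖² ≤ (1+δ)‖x‖²` for every `s`-sparse `x`. -/
def RIPconst {m n : Type*} [Fintype m] [Fintype n] (A : Matrix m n ℂ) (s : ℕ) : ℝ :=
  sInf {δ : ℝ | 0 ≤ δ ∧ ∀ x : n → ℂ, Sparse s x →
    (1 - δ) * sqNorm x ≤ sqNorm (A.mulVec x) ∧ sqNorm (A.mulVec x) ≤ (1 + δ) * sqNorm x}

/-- `(s₁,s₂,s₃)`-hierarchical sparsity of a 3-level block vector: at most `s₁`
of the `N₁` level-1 blocks are nonzero, within each block at most `s₂` of the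
`N₂` level-2 blocks are nonzero, and each of those contains at most `s₃`
nonzero entries. -/
def HiSparse3 {N₁ N₂ N₃ : ℕ} (s₁ s₂ s₃ : ℕ) (x : Fin N₁ × Fin N₂ × Fin N₃ → ℂ) : Prop :=
  (Finset.univ.filter fun i₁ : Fin N₁ => (fun p : Fin N₂ × Fin N₃ => x (i₁, p)) ≠ 0).card ≤ s₁ ∧
  ∀ i₁ : Fin N₁,
    (Finset.univ.filter fun i₂ : Fin N₂ => (fun i₃ : Fin N₃ => x (i₁, i₂, i₃)) ≠ 0).card ≤ s₂ ∧
    ∀ i₂ : Fin N₂, Sparse s₃ (fun i₃ : Fin N₃ => x (i₁, i₂, i₃))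

/-- The hierarchical restricted isometry constant `δ_{(s₁,s₂,s₃)}(A)` of a
matrix acting on 3-level block vectors. -/
def HiRIPconst3 {m : Type*} [Fintype m] {N₁ N₂ N₃ : ℕ}
    (A : Matrix m (Fin N₁ × Fin N₂ × Fin N₃) ℂ) (s₁ s₂ s₃ : ℕ) : ℝ :=
  sInf {δ : ℝ | 0 ≤ δ ∧ ∀ x : Fin N₁ × Fin N₂ × Fin N₃ → ℂ, HiSparse3 s₁ s₂ s₃ x →
    (1 - δ) * sqNorm x ≤ sqNorm (A.mulVec x) ∧ sqNorm (A.mulVec x) ≤ (1 + δ) * sqNorm x}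

open Matrix
open scoped Kronecker

/-!
Split `x` into blocks `x_j ∈ ℂ^{N₃'}`, `j` running over pairs of level-1 and level-2 indices,
and let `Y` be the matrix with columns `A₂ x_j`. Then `(A₁ ⊗ A₂) x` consists of `A₁` applied to
the rows of `Y`. Every row of `Y` vanishes outside the nonzero blocks of `x`, of which there are at
most `s₁ s₂`, so `‖(A₁ ⊗ A₂) x‖²` is within a factor `1 ± δ_{s₁s₂}(A₁)` of `‖Y‖² = ∑ ‖A₂ x_j‖²`;
each `x_j` is `s₃`-sparse, so this is within a factor `1 ± δ_{s₃}(A₂)` of `‖x‖² = ∑ ‖x_j‖²`.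
Composing the two distortions gives `1 ± ((1 + δ_{s₁s₂}(A₁))(1 + δ_{s₃}(A₂)) - 1)`.
-/

/-- `RIPconst A s` and `HiRIPconst3 A s₁ s₂ s₃` are, by definition, the infima of the `δ` with
`IsRestrictedIsometry (Sparse s) A δ`, resp. `IsRestrictedIsometry (HiSparse3 s₁ s₂ s₃) A δ`. -/
def IsRestrictedIsometry {m n : Type*} [Fintype m] [Fintype n] (P : (n → ℂ) → Prop)
    (A : Matrix m n ℂ) (δ : ℝ) : Prop :=
  0 ≤ δ ∧ ∀ x, P x →
    (1 - δ) * sqNorm x ≤ sqNorm (A *ᵥ x) ∧ sqNorm (A *ᵥ x) ≤ (1 + δ) * sqNorm x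

def BlockSparse {ι κ : Type*} [Fintype ι] [Fintype κ] (s t : ℕ) (x : ι × κ → ℂ) : Prop :=
  (Finset.univ.filter fun j => (fun l => x (j, l)) ≠ 0).card ≤ s ∧
    ∀ j, Sparse t fun l => x (j, l)

section SqNorm

variable {ι κ : Type*} [Fintype ι] [Fintype κ]

lemma sqNorm_nonneg (x : ι → ℂ) : 0 ≤ sqNorm x :=
  Finset.sum_nonneg fun _ _ => sq_nonneg _

lemma sqNorm_comp_equiv (x : ι → ℂ) (e : κ ≃ ι) : sqNorm (x ∘ e) = sqNorm x :=
  e.sum_comp fun i => ‖x i‖ ^ 2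

lemma sqNorm_prod (x : ι × κ → ℂ) : sqNorm x = ∑ j, sqNorm fun l => x (j, l) :=
  Fintype.sum_prod_type _

lemma sqNorm_prod_right (x : ι × κ → ℂ) : sqNorm x = ∑ l, sqNorm fun j => x (j, l) :=
  Fintype.sum_prod_type_right _

lemma sqNorm_eq_norm_sq (x : ι → ℂ) : sqNorm x = ‖WithLp.toLp 2 x‖ ^ 2 :=
  (EuclideanSpace.norm_sq_eq _).symm

lemma exists_sqNorm_mulVec_le (A : Matrix ι κ ℂ) : ∃ C, ∀ x, sqNorm (A *ᵥ x) ≤ C * sqNorm x := by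
  set T := LinearMap.toContinuousLinearMap (toEuclideanLin (𝕜 := ℂ) A)
  refine ⟨‖T‖ ^ 2, fun x => ?_⟩
  have h : ‖WithLp.toLp 2 (A *ᵥ x)‖ ≤ ‖T‖ * ‖WithLp.toLp 2 x‖ := T.le_opNorm (WithLp.toLp 2 x)
  rw [sqNorm_eq_norm_sq, sqNorm_eq_norm_sq, ← mul_pow]
  gcongr

end SqNorm

lemma distortion_bounds_trans {a b S T X : ℝ} (ha : 0 ≤ a)
    (hST : (1 - a) * T ≤ S ∧ S ≤ (1 + a) * T) (hTX : (1 - b) * X ≤ T ∧ T ≤ (1 + b) * X) :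
    (1 - ((1 + a) * (1 + b) - 1)) * X ≤ S ∧ S ≤ (1 + ((1 + a) * (1 + b) - 1)) * X := by
  constructor
  · rcases le_total a 1 with ha1 | ha1
    · nlinarith [mul_le_mul_of_nonneg_left hTX.1 (sub_nonneg.2 ha1)]
    · nlinarith
  · nlinarith [mul_le_mul_of_nonneg_left hTX.2 (by linarith : 0 ≤ 1 + a)]

namespace IsRestrictedIsometry

variable {m n n' : Type*} [Fintype m] [Fintype n] [Fintype n'] {P Q : (n → ℂ) → Prop}
  {A : Matrix m n ℂ} {δ : ℝ}

lemma nonempty (P : (n → ℂ) → Prop) (A : Matrix m n ℂ) :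
    {δ | IsRestrictedIsometry P A δ}.Nonempty := by
  obtain ⟨C, hC⟩ := exists_sqNorm_mulVec_le A
  refine ⟨1 + |C|, by positivity, fun x _ => ⟨?_, ?_⟩⟩
  · nlinarith [sqNorm_nonneg x, sqNorm_nonneg (A *ᵥ x), abs_nonneg C]
  · nlinarith [hC x, sqNorm_nonneg x, le_abs_self C]

lemma isClosed (P : (n → ℂ) → Prop) (A : Matrix m n ℂ) :
    IsClosed {δ | IsRestrictedIsometry P A δ} := by
  simp only [IsRestrictedIsometry, Set.ofPred_and, Set.ofPred_forall]
  refine isClosed_Ici.inter <| isClosed_iInter fun x => isClosed_iInter fun _ => ?_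
  exact (isClosed_le (by fun_prop) (by fun_prop)).inter (isClosed_le (by fun_prop) (by fun_prop))

lemma sInf_le (h : IsRestrictedIsometry P A δ) : sInf {δ | IsRestrictedIsometry P A δ} ≤ δ :=
  csInf_le ⟨0, fun _ hδ => hδ.1⟩ h

lemma sInf_mem (P : (n → ℂ) → Prop) (A : Matrix m n ℂ) :
    IsRestrictedIsometry P A (sInf {δ | IsRestrictedIsometry P A δ}) :=
  (isClosed P A).csInf_mem (nonempty P A) ⟨0, fun _ hδ => hδ.1⟩

lemma mono (h : IsRestrictedIsometry P A δ) (hQP : ∀ x, Q x → P x) :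
    IsRestrictedIsometry Q A δ :=
  ⟨h.1, fun x hx => h.2 x (hQP x hx)⟩

lemma submatrix_equiv (h : IsRestrictedIsometry P A δ) (e : n' ≃ n) :
    IsRestrictedIsometry (fun x => P (x ∘ e.symm)) (A.submatrix id e) δ := by
  refine ⟨h.1, fun x hx => ?_⟩
  rw [submatrix_mulVec_equiv, Function.comp_id, ← sqNorm_comp_equiv x e.symm]
  exact h.2 _ hx

lemma sum_sqNorm {ι : Type*} [Fintype ι] (h : IsRestrictedIsometry P A δ) (y : ι → n → ℂ)
    (hy : ∀ i, P (y i)) :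
    (1 - δ) * ∑ i, sqNorm (y i) ≤ ∑ i, sqNorm (A *ᵥ y i) ∧
      ∑ i, sqNorm (A *ᵥ y i) ≤ (1 + δ) * ∑ i, sqNorm (y i) := by
  simp only [Finset.mul_sum]
  exact ⟨Finset.sum_le_sum fun i _ => (h.2 _ (hy i)).1,
    Finset.sum_le_sum fun i _ => (h.2 _ (hy i)).2⟩

lemma kronecker {m₁ m₂ ι κ : Type*} [Fintype m₁] [Fintype m₂] [Fintype ι] [Fintype κ]
    {A₁ : Matrix m₁ ι ℂ} {A₂ : Matrix m₂ κ ℂ} {s t : ℕ} {δ₁ δ₂ : ℝ}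
    (h₁ : IsRestrictedIsometry (Sparse s) A₁ δ₁) (h₂ : IsRestrictedIsometry (Sparse t) A₂ δ₂) :
    IsRestrictedIsometry (BlockSparse s t) (A₁ ⊗ₖ A₂) ((1 + δ₁) * (1 + δ₂) - 1) := by
  refine ⟨by nlinarith [h₁.1, h₂.1], fun x hx => ?_⟩
  set X : ι → κ → ℂ := fun j l => x (j, l)
  set Y : m₂ → ι → ℂ := fun r j => (A₂ *ᵥ X j) r
  have hmulVec : ∀ r₁ r₂, ((A₁ ⊗ₖ A₂) *ᵥ x) (r₁, r₂) = (A₁ *ᵥ Y r₂) r₁ := by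
    intro r₁ r₂
    simp only [mulVec, dotProduct, kronecker_apply, Fintype.sum_prod_type, Finset.mul_sum, Y, X]
    simp_rw [mul_assoc]
  have hAx : sqNorm ((A₁ ⊗ₖ A₂) *ᵥ x) = ∑ r₂, sqNorm (A₁ *ᵥ Y r₂) := by
    simp only [sqNorm_prod_right, hmulVec]
  have hY : ∑ r₂, sqNorm (Y r₂) = ∑ j, sqNorm (A₂ *ᵥ X j) := Finset.sum_comm
  have hY_sparse : ∀ r₂, Sparse s (Y r₂) := fun r₂ =>
    (Finset.card_le_card <| Finset.monotone_filter_right _ fun j _ hYj hXj =>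
      hYj (by simp only [Y, show X j = 0 from hXj, mulVec_zero, Pi.zero_apply])).trans hx.1
  have hST := h₁.sum_sqNorm Y hY_sparse
  have hTX := h₂.sum_sqNorm X hx.2
  rw [← hY] at hTX
  rw [hAx, sqNorm_prod]
  exact distortion_bounds_trans h₁.1 hST hTX

end IsRestrictedIsometry

lemma HiSparse3.blockSparse {N₁ N₂ N₃ s₁ s₂ s₃ : ℕ} {x : Fin N₁ × Fin N₂ × Fin N₃ → ℂ}
    (hx : HiSparse3 s₁ s₂ s₃ x) : BlockSparse (s₁ * s₂) s₃ (x ∘ Equiv.prodAssoc _ _ _) := by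
  refine ⟨?_, fun j => (hx.2 j.1).2 j.2⟩
  have hfst : ∀ j ∈ Finset.univ.filter fun j : Fin N₁ × Fin N₂ => (fun l => x (j.1, j.2, l)) ≠ 0,
      j.1 ∈ Finset.univ.filter fun i₁ => (fun p : Fin N₂ × Fin N₃ => x (i₁, p)) ≠ 0 := by
    simp only [Finset.mem_filter, Finset.mem_univ, true_and]
    exact fun j hj h => hj (funext fun l => congrFun h (j.2, l))
  have hfiber : ∀ i₁, (Finset.univ.filter fun j : Fin N₁ × Fin N₂ =>
      (fun l => x (j.1, j.2, l)) ≠ 0 ∧ j.1 = i₁).card ≤ s₂ := by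
    intro i₁
    refine (Finset.card_le_card_of_injOn Prod.snd ?_ ?_).trans (hx.2 i₁).1
    · rintro ⟨j₁, j₂⟩ hj
      simp only [Finset.coe_filter, Finset.mem_univ, true_and, Set.mem_ofPred_eq] at hj ⊢
      exact hj.2 ▸ hj.1
    · intro j hj j' hj' h
      simp_all [Prod.ext_iff]
  rw [mul_comm]
  refine (Finset.card_le_mul_card_image_of_maps_to hfst s₂ fun i₁ _ => ?_).trans
    (Nat.mul_le_mul_left _ hx.1)
  rw [Finset.filter_filter]
  exact hfiber i₁

theorem hiRIP_kronecker_inner_general (M₁ M₂ N₁' N₂' N₃' s₁ s₂ s₃ : ℕ)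
    (A₁ : Matrix (Fin M₁) (Fin N₁' × Fin N₂') ℂ) (A₂ : Matrix (Fin M₂) (Fin N₃') ℂ)
    (A : Matrix (Fin M₁ × Fin M₂) (Fin N₁' × Fin N₂' × Fin N₃') ℂ)
    (hA : A = fun r j => A₁ r.1 (j.1, j.2.1) * A₂ r.2 j.2.2) :
    HiRIPconst3 A s₁ s₂ s₃ ≤ (1 + RIPconst A₁ (s₁ * s₂)) * (1 + RIPconst A₂ s₃) - 1 := by
  have h₁ : IsRestrictedIsometry (Sparse (s₁ * s₂)) A₁ (RIPconst A₁ (s₁ * s₂)) := .sInf_mem _ _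
  have h₂ : IsRestrictedIsometry (Sparse s₃) A₂ (RIPconst A₂ s₃) := .sInf_mem _ _
  have hA' : A = (A₁ ⊗ₖ A₂).submatrix id (Equiv.prodAssoc _ _ _).symm := by
    subst hA; rfl
  have hHi : IsRestrictedIsometry (HiSparse3 s₁ s₂ s₃) A
      ((1 + RIPconst A₁ (s₁ * s₂)) * (1 + RIPconst A₂ s₃) - 1) := by
    rw [hA']
    exact ((h₁.kronecker h₂).submatrix_equiv _).mono fun x hx => hx.blockSparse
  exact hHi.sInf_le

/-- For a Kronecker product `A = A₁ ⊗ A₂` acting on 3-level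
block vectors in `ℂ^{N₁'·N₂'·N₃'}` with `N₁ = N₁'N₂'` and `N₂ = N₃'` (the
scalar entries within each level-2 block correspond to the columns of `A₂`),
one has `δ_{(s₁,s₂,s₃)}(A₁ ⊗ A₂) ≤ (1 + δ_{s₁s₂}(A₁))(1 + δ_{s₃}(A₂)) − 1`. -/
theorem hiRIP_kronecker_inner (M₁ M₂ N₁' N₂' N₃' s₁ s₂ s₃ : ℕ)
    (hs₁ : 0 < s₁) (hs₂ : 0 < s₂) (hs₃ : 0 < s₃)
    (hN₁ : s₁ ≤ N₁') (hN₂ : s₂ ≤ N₂') (hN₃ : s₃ ≤ N₃')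
    (A₁ : Matrix (Fin M₁) (Fin N₁' × Fin N₂') ℂ) (A₂ : Matrix (Fin M₂) (Fin N₃') ℂ)
    (A : Matrix (Fin M₁ × Fin M₂) (Fin N₁' × Fin N₂' × Fin N₃') ℂ)
    (hA : A = fun r j => A₁ r.1 (j.1, j.2.1) * A₂ r.2 j.2.2) :
    HiRIPconst3 A s₁ s₂ s₃ ≤ (1 + RIPconst A₁ (s₁ * s₂)) * (1 + RIPconst A₂ s₃) - 1 :=
  hiRIP_kronecker_inner_general M₁ M₂ N₁' N₂' N₃' s₁ s₂ s₃ A₁ A₂ A hA
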